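/- arXiv:1904.04522 — 2 statements merged into one kernel-verified Lean document; each statement's English description precedes it below -/
import Mathlib

section
/- Suppose F₂ is atomless conditionally to F₁. Let C ∈ F₂ and let h : Ω → [0, 1] be F₁-measurable. Then there exists a set B ∈ F₂ with B ⊂ C such that E[1_B | F₁] = h · E[1_C | F₁] almost surely. -/
/-!
Put `f := h ⋅ E[1_C | F₁]` and call `X ⊆ C` admissible when `E[1_X | F₁] ≤ f`. Admissible sets
are closed under increasing unions (conditional expectations of indicators are continuous along
increasing unions, tested on `F₁`-sets), so a greedy exhaustion yields an admissible `U` that no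
admissible superset beats in measure. If `E[1_U | F₁] < f` on a non-null set, conditional
atomlessness, iterated by halving, produces a non-null `B ⊆ C \ U` with
`E[1_B | F₁] ≤ f - E[1_U | F₁]`, and `U ∪ B` contradicts the maximality of `U`.
-/

open MeasureTheory Filter Set Topology
open scoped ENNReal ProbabilityTheory

/-- `F₂` is atomless conditionally to `F₁`: for every `A ∈ F₂` there is `B ∈ F₂`, `B ⊆ A`,
with `0 < E[1_B | F₁] < E[1_A | F₁]` almost surely on the set `{E[1_A | F₁] > 0}`. -/
def CondAtomless {Ω : Type*} (m1 m2 : MeasurableSpace Ω) (μ : @Measure Ω m2) : Prop :=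
  ∀ A : Set Ω, MeasurableSet[m2] A →
    ∃ B : Set Ω, MeasurableSet[m2] B ∧ B ⊆ A ∧
      ∀ᵐ ω ∂μ, 0 < (μ[A.indicator (fun _ => (1 : ℝ)) | m1]) ω →
        0 < (μ[B.indicator (fun _ => (1 : ℝ)) | m1]) ω ∧
        (μ[B.indicator (fun _ => (1 : ℝ)) | m1]) ω <
          (μ[A.indicator (fun _ => (1 : ℝ)) | m1]) ω

theorem exists_maximal_measure_of_iUnion_mem {α : Type*} [MeasurableSpace α] (μ : Measure α)
    [IsFiniteMeasure μ] {P : Set α → Prop} {X₀ : Set α} (h₀ : P X₀)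
    (hP : ∀ X : ℕ → Set α, Monotone X → (∀ n, P (X n)) → P (⋃ n, X n)) :
    ∃ U, P U ∧ ∀ Y, P Y → U ⊆ Y → μ Y ≤ μ U := by
  -- `s X` is the largest measure reachable from `X`; step `n` comes within `n⁻¹` of it.
  set s : Set α → ℝ≥0∞ := fun X => ⨆ (Y : Set α) (_ : P Y ∧ X ⊆ Y), μ Y
  have le_s : ∀ {X Y}, P Y → X ⊆ Y → μ Y ≤ s X := fun hY hXY =>
    le_iSup₂ (f := fun Y (_ : P Y ∧ _ ⊆ Y) => μ Y) _ ⟨hY, hXY⟩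
  have s_ne_top : ∀ X, s X ≠ ∞ := fun X => ne_top_of_le_ne_top (measure_ne_top μ univ)
    (iSup₂_le fun Y _ => measure_mono (subset_univ Y))
  have step : ∀ (n : ℕ) (X : {X // P X}),
      ∃ Y : {Y // P Y}, X.1 ⊆ Y.1 ∧ s X.1 ≤ μ Y.1 + (n : ℝ≥0∞)⁻¹ := by
    rintro n ⟨X, hX⟩
    by_cases hsX : s X = 0
    · exact ⟨⟨X, hX⟩, subset_rfl, by simp [hsX]⟩
    have hlt : s X - (n : ℝ≥0∞)⁻¹ < s X := ENNReal.sub_lt_self (s_ne_top X) hsX (by simp)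
    obtain ⟨Y, hlt⟩ := lt_iSup_iff.1 hlt
    obtain ⟨⟨hY, hXY⟩, hlt⟩ := lt_iSup_iff.1 hlt
    exact ⟨⟨Y, hY⟩, hXY, tsub_le_iff_right.1 hlt.le⟩
  choose next hnext using step
  let seq : ℕ → {X // P X} := fun n => Nat.rec (motive := fun _ => {X // P X}) ⟨X₀, h₀⟩ next n
  have hmono : Monotone fun n => (seq n).1 :=
    monotone_nat_of_le_succ fun n => (hnext n (seq n)).1
  refine ⟨⋃ n, (seq n).1, hP _ hmono fun n => (seq n).2, fun Y hY hUY =>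
    ENNReal.le_of_forall_pos_le_add fun ε hε _ => ?_⟩
  obtain ⟨n, hn⟩ := ENNReal.exists_inv_nat_lt (a := ε) (by simpa using hε.ne')
  calc μ Y ≤ s (seq n).1 := le_s hY ((subset_iUnion _ n).trans hUY)
    _ ≤ μ (seq (n + 1)).1 + (n : ℝ≥0∞)⁻¹ := (hnext n (seq n)).2
    _ ≤ μ (⋃ n, (seq n).1) + ε :=
      add_le_add (measure_mono (subset_iUnion (fun n => (seq n).1) (n + 1))) hn.le

section CondExpIndicator

variable {Ω : Type*} {m1 m2 : MeasurableSpace Ω} {μ : Measure[m2] Ω} {s t : Set Ω}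

lemma condExp_indicator_ae_eq_zero (ht : μ t = 0) : μ⟦t | m1⟧ =ᵐ[μ] 0 :=
  (condExp_congr_ae (indicator_meas_zero ht)).trans (by rw [condExp_zero])

variable [IsFiniteMeasure μ]

lemma condExp_indicator_union (hs : MeasurableSet[m2] s) (ht : MeasurableSet[m2] t)
    (hst : Disjoint s t) : μ⟦s ∪ t | m1⟧ =ᵐ[μ] μ⟦s | m1⟧ + μ⟦t | m1⟧ := by
  rw [indicator_union_of_disjoint hst]
  exact condExp_add ((integrable_const 1).indicator hs) ((integrable_const 1).indicator ht) m1

lemma condExp_indicator_sdiff (hs : MeasurableSet[m2] s) (ht : MeasurableSet[m2] t)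
    (hst : s ⊆ t) : μ⟦t \ s | m1⟧ =ᵐ[μ] μ⟦t | m1⟧ - μ⟦s | m1⟧ := by
  rw [indicator_sdiff hst]
  exact condExp_sub ((integrable_const 1).indicator ht) ((integrable_const 1).indicator hs) m1

lemma condExp_indicator_inter (ht : MeasurableSet[m2] t) (hs : MeasurableSet[m1] s) :
    μ⟦t ∩ s | m1⟧ =ᵐ[μ] s.indicator (μ⟦t | m1⟧) := by
  rw [inter_comm, ← indicator_indicator]
  exact condExp_indicator ((integrable_const 1).indicator ht) hs

lemma setIntegral_condExp_indicator (hm : m1 ≤ m2) (ht : MeasurableSet[m2] t)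
    (hs : MeasurableSet[m1] s) : ∫ ω in s, (μ⟦t | m1⟧) ω ∂μ = μ.real (t ∩ s) := by
  rw [setIntegral_condExp hm ((integrable_const 1).indicator ht) hs,
    setIntegral_indicator ht]
  simp [inter_comm]

lemma condExp_indicator_iUnion_le (hm : m1 ≤ m2) {X : ℕ → Set Ω}
    (hX : ∀ n, MeasurableSet[m2] (X n)) (hmono : Monotone X) {f : Ω → ℝ}
    (hf : StronglyMeasurable[m1] f) (hfi : Integrable f μ) (hle : ∀ n, μ⟦X n | m1⟧ ≤ᵐ[μ] f) :
    μ⟦⋃ n, X n | m1⟧ ≤ᵐ[μ] f := by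
  refine ae_le_of_ae_le_trim (ae_le_of_forall_setIntegral_le
    (integrable_condExp.trim hm stronglyMeasurable_condExp) (hfi.trim hm hf) fun S hS _ => ?_)
  rw [← setIntegral_trim hm stronglyMeasurable_condExp hS, ← setIntegral_trim hm hf hS,
    setIntegral_condExp_indicator hm (MeasurableSet.iUnion hX) hS]
  have hlim : Tendsto (fun n => μ.real (X n ∩ S)) atTop (𝓝 (μ.real ((⋃ n, X n) ∩ S))) := by
    rw [iUnion_inter]
    exact (ENNReal.tendsto_toReal (measure_ne_top _ _)).comp
      (tendsto_measure_iUnion_atTop fun a b hab => inter_subset_inter_left S (hmono hab))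
  refine le_of_tendsto' hlim fun n => ?_
  rw [← setIntegral_condExp_indicator hm (hX n) hS]
  exact setIntegral_mono_ae integrable_condExp.integrableOn hfi.integrableOn (hle n)

end CondExpIndicator

namespace CondAtomless

variable {Ω : Type*} {m1 m2 : MeasurableSpace Ω} {μ : Measure[m2] Ω} [IsFiniteMeasure μ]
  {A : Set Ω}

/-- Of the two pieces `B₀` and `A \ B₀` given by conditional atomlessness, keep at each point the
one of smaller conditional mass; this choice is `m1`-measurable. -/
lemma exists_subset_condExp_le_half (hca : CondAtomless m1 m2 μ) (hm : m1 ≤ m2)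
    (hA : MeasurableSet[m2] A) :
    ∃ B, MeasurableSet[m2] B ∧ B ⊆ A ∧ ∀ᵐ ω ∂μ, 0 < (μ⟦A | m1⟧) ω →
      0 < (μ⟦B | m1⟧) ω ∧ (μ⟦B | m1⟧) ω ≤ (μ⟦A | m1⟧) ω / 2 := by
  obtain ⟨B₀, hB₀, hB₀A, hsplit⟩ := hca A hA
  set S : Set Ω := {ω | (μ⟦B₀ | m1⟧) ω ≤ (μ⟦A | m1⟧) ω / 2}
  have hS : MeasurableSet[m1] S := measurableSet_le stronglyMeasurable_condExp.measurable
    (stronglyMeasurable_condExp.measurable.div_const 2)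
  have hdisj : Disjoint (B₀ ∩ S) ((A \ B₀) ∩ Sᶜ) :=
    disjoint_compl_right.mono inter_subset_right inter_subset_right
  refine ⟨B₀ ∩ S ∪ (A \ B₀) ∩ Sᶜ,
    (hB₀.inter (hm _ hS)).union ((hA.diff hB₀).inter (hm _ hS.compl)),
    union_subset (inter_subset_left.trans hB₀A) (inter_subset_left.trans sdiff_subset), ?_⟩
  filter_upwards [condExp_indicator_union (hB₀.inter (hm _ hS))
      ((hA.diff hB₀).inter (hm _ hS.compl)) hdisj, condExp_indicator_inter hB₀ hS,
    condExp_indicator_inter (hA.diff hB₀) hS.compl, condExp_indicator_sdiff hB₀ hA hB₀A, hsplit]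
    with ω hunion hB₀S hdiffS hdiff hsplit hpos
  obtain ⟨hB₀pos, hB₀lt⟩ := hsplit hpos
  rw [hunion, Pi.add_apply, hB₀S, hdiffS]
  by_cases hω : ω ∈ S
  · rw [indicator_of_mem hω, indicator_of_notMem (notMem_compl_iff.2 hω), add_zero]
    exact ⟨hB₀pos, hω⟩
  · rw [indicator_of_notMem hω, indicator_of_mem (mem_compl hω), zero_add, hdiff, Pi.sub_apply]
    have : (μ⟦A | m1⟧) ω / 2 < (μ⟦B₀ | m1⟧) ω := not_le.1 hω
    constructor <;> linarith

lemma exists_subset_condExp_le_div_pow (hca : CondAtomless m1 m2 μ) (hm : m1 ≤ m2)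
    (hA : MeasurableSet[m2] A) (n : ℕ) :
    ∃ B, MeasurableSet[m2] B ∧ B ⊆ A ∧ ∀ᵐ ω ∂μ, 0 < (μ⟦A | m1⟧) ω →
      0 < (μ⟦B | m1⟧) ω ∧ (μ⟦B | m1⟧) ω ≤ (μ⟦A | m1⟧) ω / 2 ^ n := by
  induction n with
  | zero => exact ⟨A, hA, subset_rfl, ae_of_all μ fun ω hpos => ⟨hpos, by simp⟩⟩
  | succ n ih =>
    obtain ⟨B, hB, hBA, hBsmall⟩ := ih
    obtain ⟨B', hB', hB'B, hB'half⟩ := hca.exists_subset_condExp_le_half hm hB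
    refine ⟨B', hB', hB'B.trans hBA, ?_⟩
    filter_upwards [hBsmall, hB'half] with ω hBω hB'ω hpos
    obtain ⟨hBpos, hBle⟩ := hBω hpos
    obtain ⟨hB'pos, hB'le⟩ := hB'ω hBpos
    refine ⟨hB'pos, hB'le.trans ?_⟩
    rw [pow_succ, ← div_div]
    exact div_le_div_of_nonneg_right hBle zero_le_two

lemma exists_subset_measure_ne_zero_condExp_le (hca : CondAtomless m1 m2 μ) (hm : m1 ≤ m2)
    (hA : MeasurableSet[m2] A) {g : Ω → ℝ} (hg : StronglyMeasurable[m1] g) (hg0 : 0 ≤ᵐ[μ] g)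
    (hgA : ∀ᵐ ω ∂μ, 0 < g ω → 0 < (μ⟦A | m1⟧) ω) (hg_pos : ¬ g ≤ᵐ[μ] 0) :
    ∃ B, MeasurableSet[m2] B ∧ B ⊆ A ∧ μ B ≠ 0 ∧ μ⟦B | m1⟧ ≤ᵐ[μ] g := by
  set S : ℕ → Set Ω := fun n => {ω | 0 < g ω} ∩ {ω | (μ⟦A | m1⟧) ω / 2 ^ n ≤ g ω}
  have hS : ∀ n, MeasurableSet[m1] (S n) := fun n =>
    (measurableSet_lt measurable_const hg.measurable).inter
      (measurableSet_le (stronglyMeasurable_condExp.measurable.div_const _) hg.measurable)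
  have hcover : {ω | ¬ g ω ≤ 0} ⊆ ⋃ n, S n := by
    intro ω hω
    have hω : 0 < g ω := not_le.1 hω
    obtain ⟨n, hn⟩ := pow_unbounded_of_one_lt ((μ⟦A | m1⟧) ω / g ω) one_lt_two
    refine mem_iUnion.2 ⟨n, hω, ?_⟩
    rw [div_lt_iff₀ hω] at hn
    show (μ⟦A | m1⟧) ω / 2 ^ n ≤ g ω
    rw [div_le_iff₀ (by positivity)]
    linarith
  obtain ⟨n, hn⟩ : ∃ n, μ (S n) ≠ 0 := by
    by_contra! h
    exact hg_pos (ae_iff.2 (measure_mono_null hcover (measure_iUnion_null h)))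
  obtain ⟨B, hB, hBA, hBsmall⟩ := hca.exists_subset_condExp_le_div_pow hm hA n
  have hBS := condExp_indicator_inter (μ := μ) hB (hS n)
  refine ⟨B ∩ S n, hB.inter (hm _ (hS n)), inter_subset_left.trans hBA, fun h0 => hn ?_, ?_⟩
  · refine measure_eq_zero_iff_ae_notMem.2 ?_
    filter_upwards [hBS, condExp_indicator_ae_eq_zero h0, hgA, hBsmall]
      with ω hBSω hzero hgAω hBω hω
    rw [indicator_of_mem hω] at hBSω
    exact (hBω (hgAω hω.1)).1.ne' (hBSω.symm.trans hzero)
  · filter_upwards [hBS, hg0, hgA, hBsmall] with ω hBSω hg0ω hgAω hBω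
    rw [hBSω]
    by_cases hω : ω ∈ S n
    · rw [indicator_of_mem hω]
      exact (hBω (hgAω hω.1)).2.trans hω.2
    · rw [indicator_of_notMem hω]
      exact hg0ω

theorem exists_subset_condExp_indicator_ae_eq (hca : CondAtomless m1 m2 μ) (hm : m1 ≤ m2)
    {C : Set Ω} (hC : MeasurableSet[m2] C) {f : Ω → ℝ} (hf : StronglyMeasurable[m1] f)
    (hf0 : 0 ≤ᵐ[μ] f) (hfC : f ≤ᵐ[μ] μ⟦C | m1⟧) :
    ∃ B, MeasurableSet[m2] B ∧ B ⊆ C ∧ μ⟦B | m1⟧ =ᵐ[μ] f := by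
  have hfi : Integrable f μ := integrable_condExp.mono' (hf.mono hm).aestronglyMeasurable
    (by filter_upwards [hf0, hfC] with ω h0 h1; rwa [Real.norm_of_nonneg h0])
  obtain ⟨U, ⟨hU, hUC, hUf⟩, hmax⟩ := exists_maximal_measure_of_iUnion_mem μ
    (P := fun X => MeasurableSet[m2] X ∧ X ⊆ C ∧ μ⟦X | m1⟧ ≤ᵐ[μ] f) (X₀ := ∅)
    ⟨.empty, empty_subset C, by rwa [indicator_empty, ← Pi.zero_def, condExp_zero]⟩
    fun X hmono hX => ⟨.iUnion fun n => (hX n).1, iUnion_subset fun n => (hX n).2.1,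
        condExp_indicator_iUnion_le hm (fun n => (hX n).1) hmono hf hfi fun n => (hX n).2.2⟩
  refine ⟨U, hU, hUC, hUf.antisymm (not_not.1 fun hlt => ?_)⟩
  obtain ⟨B, hB, hBsub, hB0, hBle⟩ := hca.exists_subset_measure_ne_zero_condExp_le hm
    (hC.diff hU) (hf.sub stronglyMeasurable_condExp)
    (by filter_upwards [hUf] with ω hω using sub_nonneg.2 hω)
    (by filter_upwards [condExp_indicator_sdiff hU hC hUC, hfC] with ω hdiff hfCω hpos
        rw [hdiff]; simp only [Pi.sub_apply] at hpos ⊢; linarith)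
    (fun h => hlt (by filter_upwards [h] with ω hω using sub_nonpos.1 hω))
  have hUB : Disjoint U B := disjoint_sdiff_right.mono_right hBsub
  have hlt : μ U < μ (U ∪ B) := by
    rw [measure_union hUB hB]
    exact ENNReal.lt_add_right (measure_ne_top μ U) hB0
  refine hlt.not_ge (hmax _ ⟨hU.union hB, union_subset hUC (hBsub.trans sdiff_subset), ?_⟩
    subset_union_left)
  filter_upwards [condExp_indicator_union hU hB hUB, hBle] with ω hUBω hBω
  rw [hUBω]
  simp only [Pi.add_apply, Pi.sub_apply] at hBω ⊢
  linarith

end CondAtomless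

/-- If `F₂` is atomless conditionally to `F₁`, `C ∈ F₂` and `h : Ω → [0,1]` is
`F₁`-measurable, then there is `B ∈ F₂`, `B ⊆ C`, with
`E[1_B | F₁] = h ⋅ E[1_C | F₁]` almost surely. -/
theorem stmt_5 {Ω : Type*} {m1 m2 : MeasurableSpace Ω} (hm : m1 ≤ m2)
    (μ : @Measure Ω m2) [IsProbabilityMeasure μ]
    (hca : CondAtomless m1 m2 μ)
    (C : Set Ω) (hC : MeasurableSet[m2] C)
    (h : Ω → ℝ) (hmeas : Measurable[m1] h) (hrange : ∀ ω, h ω ∈ Set.Icc (0 : ℝ) 1) :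
    ∃ B : Set Ω, MeasurableSet[m2] B ∧ B ⊆ C ∧
      (μ[B.indicator (fun _ => (1 : ℝ)) | m1]) =ᵐ[μ]
        fun ω => h ω * (μ[C.indicator (fun _ => (1 : ℝ)) | m1]) ω := by
  have hC0 : 0 ≤ᵐ[μ] μ⟦C | m1⟧ :=
    condExp_nonneg (ae_of_all μ (indicator_nonneg fun _ _ => zero_le_one))
  exact hca.exists_subset_condExp_indicator_ae_eq hm hC
    (hmeas.stronglyMeasurable.mul stronglyMeasurable_condExp)
    (by filter_upwards [hC0] with ω hω using mul_nonneg (hrange ω).1 hω)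
    (by filter_upwards [hC0] with ω hω using mul_le_of_le_one_left hω (hrange ω).2)
end

section
/- Suppose F₂ is atomless conditionally to F₁. Then for every F₁-measurable function h : Ω → [0, 1] there exists a set B_h ∈ F₂ such that E[1_{B_h} | F₁] = h almost surely. -/
/-!
Call `B ∈ F₂` admissible when `E[1_B | F₁] ≤ h` a.e. Admissibility is equivalent to
`μ (B ∩ T) ≤ ∫_T h` for all `T ∈ F₁`, so it is preserved by increasing unions, and an exhaustion
argument on `μ` yields an admissible `M` that is maximal up to null sets. Iterated halving with
the atomless hypothesis gives `B ⊆ Mᶜ` with `0 < E[1_B | F₁] ≤ 2⁻ⁿ` wherever `E[1_{Mᶜ} | F₁] > 0`.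
On `S = {E[1_M | F₁] + 2⁻ⁿ ≤ h}` the set `M ∪ (B ∩ S)` is still admissible, so maximality
forces `μ S = 0` for every `n`, i.e. `E[1_M | F₁] = h` a.e.
-/

open MeasureTheory

open Set Filter
open scoped ENNReal

namespace MeasureTheory

theorem exists_ae_maximal_of_iUnion_mem {Ω : Type*} {m : MeasurableSpace Ω} (μ : Measure Ω)
    [IsFiniteMeasure μ] {𝒢 : Set (Set Ω)} (h𝒢 : ∀ G ∈ 𝒢, MeasurableSet G) {G₀ : Set Ω}
    (hG₀ : G₀ ∈ 𝒢)
    (hiUnion : ∀ s : ℕ → Set Ω, Monotone s → (∀ n, s n ∈ 𝒢) → ⋃ n, s n ∈ 𝒢) :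
    ∃ G ∈ 𝒢, ∀ G' ∈ 𝒢, G ⊆ G' → μ (G' \ G) = 0 := by
  let sup : 𝒢 → ℝ≥0∞ := fun G => ⨆ G' : {G' ∈ 𝒢 | G.1 ⊆ G'}, μ G'
  have hstep (G : 𝒢) (n : ℕ) : ∃ G' : 𝒢, G.1 ⊆ G' ∧ sup G < μ G' + (n : ℝ≥0∞)⁻¹ := by
    have : Nonempty {G' ∈ 𝒢 | G.1 ⊆ G'} := ⟨⟨G, G.2, subset_rfl⟩⟩
    have hsup_ne_top : sup G ≠ ∞ := ne_top_of_le_ne_top (measure_ne_top μ univ)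
      (iSup_le fun _ => measure_mono (subset_univ _))
    have hlt := ENNReal.lt_add_right hsup_ne_top (ENNReal.inv_ne_zero.2 (ENNReal.natCast_ne_top n))
    rw [ENNReal.iSup_add] at hlt
    obtain ⟨⟨G', hG', hGG'⟩, hlt'⟩ := lt_iSup_iff.1 hlt
    exact ⟨⟨G', hG'⟩, hGG', hlt'⟩
  -- `G (n + 1)` nearly realises the largest measure of a member of `𝒢` containing `G n`.
  choose next hsub hnext using hstep
  let G : ℕ → 𝒢 := fun n => Nat.rec ⟨G₀, hG₀⟩ (fun n G => next G n) n
  have hmono : Monotone fun n => (G n).1 := monotone_nat_of_le_succ fun n => hsub (G n) n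
  have hU := hiUnion _ hmono fun n => (G n).2
  refine ⟨⋃ n, (G n).1, hU, fun G' hG' hUG' => ?_⟩
  have hle : μ G' ≤ μ (⋃ n, (G n).1) := by
    refine ENNReal.le_of_forall_pos_le_add fun ε hε _ => ?_
    obtain ⟨n, hn⟩ := ENNReal.exists_inv_nat_lt (a := ε) (by simpa using hε.ne')
    calc μ G' ≤ sup (G n) := le_iSup_of_le ⟨G', hG', (subset_iUnion _ n).trans hUG'⟩ le_rfl
      _ ≤ μ (G (n + 1)) + (n : ℝ≥0∞)⁻¹ := (hnext (G n) n).le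
      _ ≤ μ (⋃ n, (G n).1) + ε :=
        add_le_add (measure_mono (subset_iUnion (fun n => (G n).1) (n + 1))) hn.le
  rw [measure_sdiff hUG' (h𝒢 _ hU).nullMeasurableSet (measure_ne_top μ _)]
  exact tsub_eq_zero_of_le hle

noncomputable def condProb {Ω : Type*} (m : MeasurableSpace Ω) {m₀ : MeasurableSpace Ω}
    (μ : Measure[m₀] Ω) (s : Set Ω) : Ω → ℝ :=
  μ[s.indicator fun _ => 1 | m]

variable {Ω : Type*} {m m₀ : MeasurableSpace Ω} {μ : Measure[m₀] Ω} [IsFiniteMeasure μ]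
  {s t : Set Ω}

theorem integrable_indicator_one (hs : MeasurableSet s) :
    Integrable (s.indicator fun _ => (1 : ℝ)) μ :=
  (integrable_const 1).indicator hs

omit [IsFiniteMeasure μ] in
theorem stronglyMeasurable_condProb : StronglyMeasurable[m] (condProb m μ s) :=
  stronglyMeasurable_condExp

omit [IsFiniteMeasure μ] in
theorem integrable_condProb : Integrable (condProb m μ s) μ :=
  integrable_condExp

theorem condProb_le_one (hm : m ≤ m₀) (hs : MeasurableSet s) : condProb m μ s ≤ᵐ[μ] 1 := by
  have := condExp_mono (m := m) (integrable_indicator_one (μ := μ) hs) (integrable_const 1)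
    (.of_forall fun _ => indicator_le_self' (fun _ _ => zero_le_one) _)
  rwa [condExp_const hm] at this

omit [IsFiniteMeasure μ] in
theorem condProb_of_measure_eq_zero (hs : μ s = 0) : condProb m μ s =ᵐ[μ] 0 := by
  unfold condProb
  simpa only [condExp_zero] using
    condExp_congr_ae (m := m) (indicator_meas_zero (f := fun _ => (1 : ℝ)) hs)

theorem condProb_union (hs : MeasurableSet s) (ht : MeasurableSet t) (hst : Disjoint s t) :
    condProb m μ (s ∪ t) =ᵐ[μ] condProb m μ s + condProb m μ t := by
  rw [condProb, indicator_union_of_disjoint hst]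
  exact condExp_add (integrable_indicator_one hs) (integrable_indicator_one ht) m

theorem condProb_inter_of_measurableSet (hs : MeasurableSet s) (ht : MeasurableSet[m] t) :
    condProb m μ (s ∩ t) =ᵐ[μ] t.indicator (condProb m μ s) := by
  rw [condProb, inter_comm, ← indicator_indicator]
  exact condExp_indicator (integrable_indicator_one hs) ht

theorem condProb_compl (hm : m ≤ m₀) (hs : MeasurableSet s) :
    condProb m μ sᶜ =ᵐ[μ] 1 - condProb m μ s := by
  rw [condProb, indicator_compl]
  refine (condExp_sub (integrable_const 1) (integrable_indicator_one hs) m).trans ?_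
  rw [condExp_const hm]
  rfl

theorem setIntegral_condProb (hm : m ≤ m₀) (hs : MeasurableSet s) (ht : MeasurableSet[m] t) :
    ∫ ω in t, condProb m μ s ω ∂μ = μ.real (s ∩ t) := by
  have := isFiniteMeasure_trim hm (μ := μ)
  rw [condProb, setIntegral_condExp hm (integrable_indicator_one hs) ht,
    setIntegral_indicator hs, setIntegral_const, smul_eq_mul, mul_one, inter_comm]

theorem condProb_ae_le_iff {g : Ω → ℝ} (hm : m ≤ m₀) (hs : MeasurableSet s)
    (hg : StronglyMeasurable[m] g) (hgi : Integrable g μ) :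
    condProb m μ s ≤ᵐ[μ] g ↔ ∀ t, MeasurableSet[m] t → μ.real (s ∩ t) ≤ ∫ ω in t, g ω ∂μ := by
  have := isFiniteMeasure_trim hm (μ := μ)
  constructor
  · intro hle t ht
    rw [← setIntegral_condProb hm hs ht]
    exact setIntegral_mono_ae integrable_condProb.integrableOn hgi.integrableOn hle
  · intro H
    refine ae_le_of_ae_le_trim (hm := hm) <| ae_le_of_forall_setIntegral_le
      (integrable_condProb.trim hm stronglyMeasurable_condProb) (hgi.trim hm hg) fun t ht _ => ?_
    rw [← setIntegral_trim hm stronglyMeasurable_condProb ht, ← setIntegral_trim hm hg ht]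
    exact (setIntegral_condProb hm hs ht).trans_le (H t ht)

theorem condProb_iUnion_ae_le {g : Ω → ℝ} (hm : m ≤ m₀) (hg : StronglyMeasurable[m] g)
    (hgi : Integrable g μ) {s : ℕ → Set Ω} (hmono : Monotone s) (hs : ∀ n, MeasurableSet (s n))
    (hle : ∀ n, condProb m μ (s n) ≤ᵐ[μ] g) : condProb m μ (⋃ n, s n) ≤ᵐ[μ] g := by
  simp only [condProb_ae_le_iff hm (hs _) hg hgi, condProb_ae_le_iff hm (.iUnion hs) hg hgi]
    at hle ⊢
  intro t ht
  have hlim := (ENNReal.tendsto_toReal (measure_ne_top μ _)).comp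
    (tendsto_measure_iUnion_atTop (μ := μ) (hmono.inter (monotone_const (c := t))))
  rw [← iUnion_inter] at hlim
  exact le_of_tendsto' hlim fun n => hle n t ht

theorem exists_ae_maximal_condProb_ae_le {g : Ω → ℝ} (hm : m ≤ m₀)
    (hg : StronglyMeasurable[m] g) (hgi : Integrable g μ) (hg0 : 0 ≤ᵐ[μ] g) :
    ∃ M, MeasurableSet M ∧ condProb m μ M ≤ᵐ[μ] g ∧
      ∀ G, MeasurableSet G → condProb m μ G ≤ᵐ[μ] g → M ⊆ G → μ (G \ M) = 0 := by
  obtain ⟨M, ⟨hM, hMg⟩, hmax⟩ := exists_ae_maximal_of_iUnion_mem μ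
    (𝒢 := {G | MeasurableSet G ∧ condProb m μ G ≤ᵐ[μ] g}) (fun G hG => hG.1)
    (G₀ := ∅) ⟨.empty, (condProb_of_measure_eq_zero measure_empty).trans_le hg0⟩
    fun s hmono hs => ⟨.iUnion fun n => (hs n).1,
      condProb_iUnion_ae_le hm hg hgi hmono (fun n => (hs n).1) fun n => (hs n).2⟩
  exact ⟨M, hM, hMg, fun G hG hGg => hmax G ⟨hG, hGg⟩⟩

end MeasureTheory

namespace CondAtomless

variable {Ω : Type*} {m m₀ : MeasurableSpace Ω} {μ : Measure[m₀] Ω} [IsFiniteMeasure μ]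
  {A : Set Ω}

theorem exists_subset_condProb_le_half (hca : CondAtomless m m₀ μ) (hm : m ≤ m₀)
    (hA : MeasurableSet A) :
    ∃ B ⊆ A, MeasurableSet B ∧ ∀ᵐ ω ∂μ, 0 < condProb m μ A ω →
      0 < condProb m μ B ω ∧ condProb m μ B ω ≤ condProb m μ A ω / 2 := by
  obtain ⟨C, hC, hCA, hCae⟩ : ∃ C, MeasurableSet C ∧ C ⊆ A ∧ ∀ᵐ ω ∂μ, 0 < condProb m μ A ω →
      0 < condProb m μ C ω ∧ condProb m μ C ω < condProb m μ A ω := hca A hA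
  -- Keep, pointwise in `ω`, whichever of `C` and `A \ C` has the smaller conditional probability.
  set T := {ω | condProb m μ C ω ≤ condProb m μ A ω / 2}
  have hT : MeasurableSet[m] T := measurableSet_le stronglyMeasurable_condProb.measurable
    (stronglyMeasurable_condProb.measurable.div_const 2)
  have hAC : MeasurableSet (A \ C) := hA.diff hC
  refine ⟨C ∩ T ∪ (A \ C) ∩ Tᶜ, union_subset (inter_subset_left.trans hCA)
    (inter_subset_left.trans sdiff_subset),
    (hC.inter (hm _ hT)).union (hAC.inter (hm _ hT.compl)), ?_⟩
  have hsplitA : condProb m μ A =ᵐ[μ] condProb m μ C + condProb m μ (A \ C) := by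
    simpa only [union_sdiff_cancel hCA] using condProb_union hC hAC disjoint_sdiff_right
  have hsplitB := condProb_union (μ := μ) (m := m) (hC.inter (hm _ hT)) (hAC.inter (hm _ hT.compl))
    (disjoint_sdiff_right.mono inter_subset_left inter_subset_left)
  filter_upwards [hCae, hsplitA, hsplitB, condProb_inter_of_measurableSet hC hT,
    condProb_inter_of_measurableSet hAC hT.compl] with ω hCω hAω hBω hCT hDT hApos
  obtain ⟨hCpos, hClt⟩ := hCω hApos
  simp only [Pi.add_apply] at hAω hBω
  rw [hBω, hCT, hDT]
  by_cases hω : ω ∈ T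
  · have : condProb m μ C ω ≤ condProb m μ A ω / 2 := hω
    simp only [indicator_of_mem hω, indicator_of_notMem (notMem_compl_iff.2 hω)]
    constructor <;> linarith
  · have : condProb m μ A ω / 2 < condProb m μ C ω := not_le.1 hω
    simp only [indicator_of_notMem hω, indicator_of_mem (mem_compl hω)]
    constructor <;> linarith

theorem exists_subset_condProb_le_div_pow (hca : CondAtomless m m₀ μ) (hm : m ≤ m₀)
    (hA : MeasurableSet A) (n : ℕ) :
    ∃ B ⊆ A, MeasurableSet B ∧ ∀ᵐ ω ∂μ, 0 < condProb m μ A ω →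
      0 < condProb m μ B ω ∧ condProb m μ B ω ≤ condProb m μ A ω / 2 ^ n := by
  induction n with
  | zero => exact ⟨A, subset_rfl, hA, .of_forall fun ω hω => ⟨hω, by simp⟩⟩
  | succ n ih =>
    obtain ⟨B, hBA, hB, hBae⟩ := ih
    obtain ⟨B', hB'B, hB', hB'ae⟩ := hca.exists_subset_condProb_le_half hm hB
    refine ⟨B', hB'B.trans hBA, hB', ?_⟩
    filter_upwards [hBae, hB'ae] with ω hBω hB'ω hApos
    obtain ⟨hBpos, hBle⟩ := hBω hApos
    obtain ⟨hB'pos, hB'le⟩ := hB'ω hBpos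
    refine ⟨hB'pos, hB'le.trans ?_⟩
    rw [pow_succ, ← div_div]
    linarith

theorem measure_condProb_add_le_eq_zero (hca : CondAtomless m m₀ μ) (hm : m ≤ m₀)
    {g : Ω → ℝ} (hg : Measurable[m] g) (hg1 : ∀ ω, g ω ≤ 1) {M : Set Ω} (hM : MeasurableSet M)
    (hMg : condProb m μ M ≤ᵐ[μ] g)
    (hmax : ∀ G, MeasurableSet G → condProb m μ G ≤ᵐ[μ] g → M ⊆ G → μ (G \ M) = 0) (n : ℕ) :
    μ {ω | condProb m μ M ω + 1 / 2 ^ n ≤ g ω} = 0 := by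
  set S := {ω | condProb m μ M ω + 1 / 2 ^ n ≤ g ω}
  have hS : MeasurableSet[m] S :=
    measurableSet_le (stronglyMeasurable_condProb.measurable.add_const _) hg
  obtain ⟨B, hBM, hB, hBae⟩ := hca.exists_subset_condProb_le_div_pow hm hM.compl n
  have hBS : ∀ᵐ ω ∂μ, ω ∈ S → 0 < condProb m μ B ω ∧ condProb m μ B ω ≤ 1 / 2 ^ n := by
    filter_upwards [hBae, condProb_compl hm hM, condProb_le_one hm hM.compl]
      with ω hBω hcompl hle_one hωS
    have hgap : condProb m μ M ω + 1 / 2 ^ n ≤ g ω := hωS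
    simp only [Pi.sub_apply, Pi.one_apply] at hcompl hle_one
    have hpow : (0 : ℝ) < 1 / 2 ^ n := by positivity
    obtain ⟨hpos, hle⟩ := hBω (by linarith [hg1 ω])
    exact ⟨hpos, hle.trans (div_le_div_of_nonneg_right hle_one (by positivity))⟩
  have hBSm : MeasurableSet (B ∩ S) := hB.inter (hm _ hS)
  have hdisj : Disjoint M (B ∩ S) :=
    disjoint_compl_right.mono_right (inter_subset_left.trans hBM)
  have hcondBS := condProb_inter_of_measurableSet (μ := μ) hB hS
  have hle : condProb m μ (M ∪ B ∩ S) ≤ᵐ[μ] g := by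
    filter_upwards [condProb_union hM hBSm hdisj, hcondBS, hBS, hMg] with ω hU hI hBω hMω
    rw [hU, Pi.add_apply, hI]
    by_cases hωS : ω ∈ S
    · have hgap : condProb m μ M ω + 1 / 2 ^ n ≤ g ω := hωS
      rw [indicator_of_mem hωS]
      linarith [(hBω hωS).2]
    · rw [indicator_of_notMem hωS, add_zero]
      exact hMω
  have hnull : μ (B ∩ S) = 0 := by
    simpa only [union_sdiff_left, hdisj.symm.sdiff_eq_left] using
      hmax _ (hM.union hBSm) hle subset_union_left
  rw [measure_eq_zero_iff_ae_notMem]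
  filter_upwards [condProb_of_measure_eq_zero hnull, hcondBS, hBS] with ω h0 hI hBω hωS
  rw [hI, indicator_of_mem hωS] at h0
  exact (hBω hωS).1.ne' h0

end CondAtomless

/-- If `F₂` is atomless conditionally to `F₁`, then for every `F₁`-measurable
`h : Ω → [0,1]` there is `B_h ∈ F₂` with `E[1_{B_h} | F₁] = h` almost surely. -/
theorem stmt_8 {Ω : Type*} {m1 m2 : MeasurableSpace Ω} (hm : m1 ≤ m2)
    (μ : @Measure Ω m2) [IsProbabilityMeasure μ]
    (hca : CondAtomless m1 m2 μ)
    (h : Ω → ℝ) (hmeas : Measurable[m1] h) (hrange : ∀ ω, h ω ∈ Set.Icc (0 : ℝ) 1) :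
    ∃ B : Set Ω, MeasurableSet[m2] B ∧
      (μ[B.indicator (fun _ => (1 : ℝ)) | m1]) =ᵐ[μ] h := by
  obtain ⟨M, hM, hMh, hmax⟩ := exists_ae_maximal_condProb_ae_le (μ := μ) hm hmeas.stronglyMeasurable
    (.of_mem_Icc 0 1 (hmeas.mono hm le_rfl).aemeasurable (ae_of_all _ hrange))
    (ae_of_all _ fun ω => (hrange ω).1)
  have hgap : ∀ᵐ ω ∂μ, ∀ n : ℕ, ¬condProb m1 μ M ω + 1 / 2 ^ n ≤ h ω :=
    ae_all_iff.2 fun n => measure_eq_zero_iff_ae_notMem.1 <|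
      hca.measure_condProb_add_le_eq_zero hm hmeas (fun ω => (hrange ω).2) hM hMh hmax n
  refine ⟨M, hM, ?_⟩
  filter_upwards [hMh, hgap] with ω hle hgap
  by_contra hne
  obtain ⟨n, hn⟩ := exists_pow_lt_of_lt_one (sub_pos.2 (lt_of_le_of_ne hle hne)) one_half_lt_one
  rw [one_div_pow] at hn
  exact hgap n (by linarith)
end
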